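/- One-step recurrence for Acc-S-DANE: let each f_i be μ-convex with μ ≥ 0 and let {f_i} have δ_s-SOD of size s with δ_s > 0; let λ > 0. Fix a subset S ⊆ {1,…,n} with |S| = s, reals A_r ≥ 0, B_r > 0, a_{r+1} > 0 with λ a_{r+1}² = (A_r + a_{r+1}) B_r, points x^r, v^r ∈ E, and arbitrary points x_{i,r+1} ∈ E for i ∈ S. Put A_{r+1} := A_r + a_{r+1}, B_{r+1} := B_r + μ a_{r+1}, y^r := (A_r x^r + a_{r+1} v^r)/A_{r+1}, x^{r+1} := (1/s)Σ_{i∈S} x_{i,r+1}, and v^{r+1} := (B_r v^r + a_{r+1} μ x^{r+1} − a_{r+1}(1/s)Σ_{i∈S} ∇f_i(x_{i,r+1}))/B_{r+1}. Let x* be a minimizer of f. Then A_r f_S(x^r) + a_{r+1} f_S(x*) + (B_r/2)‖v^r − x*‖² ≥ A_{r+1} f_S(x^{r+1}) + (B_{r+1}/2)‖v^{r+1} − x*‖² + A_{r+1}[((λ − δ_s)/2)(1/s)Σ_{i∈S}‖x_{i,r+1} − y^r‖² − (1/λ)(1/s)Σ_{i∈S}‖∇F_{i,r}(x_{i,r+1})‖²],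 where ∇F_{i,r}(x) := ∇f_i(x) + ∇f_S(y^r) − ∇f_i(y^r) + λ(x − y^r). -/

import Mathlib

/-!
The `μ`-convexity lower bounds of each `f_i` at its local point `x_{i,r+1}`, taken at `x^r` and
`x*` with weights `A_r` and `a_{r+1}`, bound `A_r f_S(x^r) + a_{r+1} f_S(x*)` from below. The
linear part of this bound splits into a term towards `y^r`, which completing the square bounds
below by the local residuals `∇F_{i,r}(x_{i,r+1})` plus `A_{r+1} (s / 2λ) ‖g‖²` for the averaged
gradient `g`, and a term along `x* - v^r`, which the update of `v` absorbs at the price of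
`s (a_{r+1}² / 2B_r) ‖g‖²`; the coupling `λ a_{r+1}² = A_{r+1} B_r` makes these two cancel.
Replacing the local points by their average `x^{r+1}` costs `(δ_s / 2) Σ ‖x_{i,r+1} - y^r‖²`:
the cross terms are increments of the gradients of the `h_i^S`, which SOD bounds through Young's
inequality and the variance decomposition around `x^{r+1}`.
-/

open Finset RealInnerProductSpace
open scoped Gradient

section

variable {E : Type*} [NormedAddCommGroup E] [InnerProductSpace ℝ E]

theorem real_inner_le_div_add_mul_norm_sq {δ : ℝ} (hδ : 0 < δ) (a b : E) :
    ⟪a, b⟫ ≤ ‖a‖ ^ 2 / (2 * δ) + δ / 2 * ‖b‖ ^ 2 := by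
  have h : 0 ≤ ‖a - δ • b‖ ^ 2 / (2 * δ) := by positivity
  rw [norm_sub_sq_real, inner_smul_right, norm_smul, Real.norm_of_nonneg hδ.le] at h
  have : ‖a‖ ^ 2 / (2 * δ) - ⟪a, b⟫ + δ / 2 * ‖b‖ ^ 2 =
      (‖a‖ ^ 2 - 2 * (δ * ⟪a, b⟫) + (δ * ‖b‖) ^ 2) / (2 * δ) := by
    field_simp
  linarith

theorem sum_norm_sub_sq_eq {ι : Type*} (T : Finset ι) (z : ι → E) {m : E}
    (hm : ∑ i ∈ T, z i = (#T : ℝ) • m) (c : E) :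
    ∑ i ∈ T, ‖z i - c‖ ^ 2 = ∑ i ∈ T, ‖z i - m‖ ^ 2 + #T * ‖m - c‖ ^ 2 := by
  have hcross : ∑ i ∈ T, ⟪z i - m, m - c⟫ = 0 := by
    rw [← sum_inner, sum_sub_distrib, hm, sum_const, ← Nat.cast_smul_eq_nsmul ℝ, sub_self,
      inner_zero_left]
  have hsplit : ∀ i, ‖z i - c‖ ^ 2 = ‖z i - m‖ ^ 2 + 2 * ⟪z i - m, m - c⟫ + ‖m - c‖ ^ 2 := fun i => by
    rw [← norm_add_sq_real, sub_add_sub_cancel]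
  simp only [hsplit, sum_add_distrib, ← mul_sum, hcross, sum_const, nsmul_eq_mul]
  ring

theorem card_mul_norm_sub_sq_le {ι : Type*} (T : Finset ι) (z : ι → E) {m : E}
    (hm : ∑ i ∈ T, z i = (#T : ℝ) • m) (c : E) :
    #T * ‖m - c‖ ^ 2 ≤ ∑ i ∈ T, ‖z i - c‖ ^ 2 := by
  rw [sum_norm_sub_sq_eq T z hm c]
  have : 0 ≤ ∑ i ∈ T, ‖z i - m‖ ^ 2 := sum_nonneg fun i _ => sq_nonneg _
  linarith

theorem add_mul_norm_sq_le {α β : ℝ} (hα : 0 < α) (hβ : 0 ≤ β) {m x y : E}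
    (hm : (α + β) • m = α • x + β • y) :
    (α + β) * ‖m‖ ^ 2 ≤ α * ‖x‖ ^ 2 + β * ‖y‖ ^ 2 := by
  have hαβ : 0 < α + β := by positivity
  refine le_of_mul_le_mul_left ?_ hαβ
  have hsq : (α + β) * ((α + β) * ‖m‖ ^ 2) =
      (α + β) * (α * ‖x‖ ^ 2 + β * ‖y‖ ^ 2) - α * β * ‖x - y‖ ^ 2 := by
    rw [← mul_assoc, ← sq, ← sq_abs (α + β), ← mul_pow, ← Real.norm_eq_abs, ← norm_smul, hm,
      norm_add_sq_real, norm_sub_sq_real, norm_smul, norm_smul, inner_smul_left,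
      inner_smul_right, Real.norm_of_nonneg hα.le, Real.norm_of_nonneg hβ]
    simp only [conj_trivial]
    ring
  have : 0 ≤ α * β * ‖x - y‖ ^ 2 := by positivity
  linarith

theorem half_mul_norm_sub_sq_le_of_smul_eq {B c a : ℝ} (hB : 0 < B) (hc : 0 ≤ c)
    {v x g v' p : E} (hv' : (B + c) • v' = B • v + c • x - a • g) :
    (B + c) / 2 * ‖v' - p‖ ^ 2 ≤
      B / 2 * ‖v - p‖ ^ 2 + a * ⟪g, p - v⟫ + c / 2 * ‖x - p‖ ^ 2 + a ^ 2 / (2 * B) * ‖g‖ ^ 2 := by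
  have hconv := add_mul_norm_sq_le (m := v' - p) (x := v - p - (a / B) • g) (y := x - p) hB hc
    (by rw [smul_sub, hv', smul_sub, smul_sub, smul_smul, mul_div_cancel₀ _ hB.ne']; module)
  have hexp : B * ‖v - p - (a / B) • g‖ ^ 2 =
      B * ‖v - p‖ ^ 2 + 2 * a * ⟪g, p - v⟫ + a ^ 2 / B * ‖g‖ ^ 2 := by
    rw [norm_sub_sq_real, inner_smul_right, norm_smul, Real.norm_eq_abs, mul_pow, sq_abs,
      ← neg_sub p v, inner_neg_left, real_inner_comm]
    field_simp
    ring
  linear_combination (1 / 2 : ℝ) * hconv + (1 / 2 : ℝ) * hexp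

theorem sum_inner_add_norm_sq_le {ι : Type*} (S : Finset ι) {lam : ℝ} (hlam : 0 < lam)
    (g b d : ι → E) {C gAvg : E} (hb : ∑ i ∈ S, b i = (#S : ℝ) • C)
    (hg : ∑ i ∈ S, g i = (#S : ℝ) • gAvg) :
    ∑ i ∈ S, ⟪g i, d i⟫ + #S / (2 * lam) * ‖gAvg‖ ^ 2 ≤
      1 / (2 * lam) * ∑ i ∈ S, ‖g i + C - b i + lam • d i‖ ^ 2
        - lam / 2 * ∑ i ∈ S, ‖d i‖ ^ 2 - ∑ i ∈ S, ⟪C - b i, d i⟫ := by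
  have hw : ∑ i ∈ S, (g i + C - b i) = (#S : ℝ) • gAvg := by
    rw [sum_sub_distrib, sum_add_distrib, hg, hb, sum_const, ← Nat.cast_smul_eq_nsmul ℝ,
      add_sub_cancel_right]
  have hjensen := card_mul_norm_sub_sq_le S (fun i => g i + C - b i) hw 0
  simp only [sub_zero] at hjensen
  have hsquare : ∀ i, ⟪g i, d i⟫ = 1 / (2 * lam) * ‖g i + C - b i + lam • d i‖ ^ 2
      - lam / 2 * ‖d i‖ ^ 2 - ⟪C - b i, d i⟫ - 1 / (2 * lam) * ‖g i + C - b i‖ ^ 2 := fun i => by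
    rw [norm_add_sq_real, inner_smul_right, norm_smul, Real.norm_of_nonneg hlam.le,
      add_sub_assoc, inner_add_left]
    field_simp
    ring
  simp only [hsquare, sum_sub_distrib, ← mul_sum]
  linear_combination 1 / (2 * lam) * hjensen

theorem sum_inner_le_of_sod {ι : Type*} (S : Finset ι) (g : ι → E → E) (G : E → E)
    (hG : ∀ z, ∑ i ∈ S, g i z = (#S : ℝ) • G z) {δ : ℝ} (hδ : 0 < δ) {x : ι → E} {m y : E}
    (hm : ∑ i ∈ S, x i = (#S : ℝ) • m)
    (hsod : ∑ i ∈ S, ‖(G m - g i m) - (G y - g i y)‖ ^ 2 ≤ #S * δ ^ 2 * ‖m - y‖ ^ 2) :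
    ∑ i ∈ S, ⟪g i m, m - x i⟫ ≤
      ∑ i ∈ S, ⟪G y - g i y, x i - y⟫ + δ / 2 * ∑ i ∈ S, ‖x i - y‖ ^ 2 := by
  have hsplit : ∀ i, ⟪g i m, m - x i⟫ = ⟪(G m - g i m) - (G y - g i y), x i - m⟫
      + ⟪G m, m - x i⟫ + ⟪G y - g i y, x i - y⟫ - ⟪G y - g i y, m - y⟫ := fun i => by
    simp only [inner_sub_left, inner_sub_right]
    ring
  have hGm : ∑ i ∈ S, ⟪G m, m - x i⟫ = 0 := by
    rw [← inner_sum, sum_sub_distrib, hm, sum_const, ← Nat.cast_smul_eq_nsmul ℝ, sub_self,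
      inner_zero_right]
  have hGy : ∑ i ∈ S, ⟪G y - g i y, m - y⟫ = 0 := by
    rw [← sum_inner, sum_sub_distrib, hG, sum_const, ← Nat.cast_smul_eq_nsmul ℝ, sub_self,
      inner_zero_left]
  have hyoung := sum_le_sum fun i (_ : i ∈ S) =>
    real_inner_le_div_add_mul_norm_sq hδ ((G m - g i m) - (G y - g i y)) (x i - m)
  have hvar := sum_norm_sub_sq_eq S x hm y
  simp only [sum_add_distrib, ← sum_div, ← mul_sum] at hyoung
  simp only [hsplit, sum_add_distrib, sum_sub_distrib, hGm, hGy]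
  have hsod' : (∑ i ∈ S, ‖(G m - g i m) - (G y - g i y)‖ ^ 2) / (2 * δ) ≤
      δ / 2 * (#S * ‖m - y‖ ^ 2) := by
    rw [div_le_iff₀ (by positivity)]
    linear_combination hsod
  linear_combination hyoung + hsod' - δ / 2 * hvar

section Gradient

variable [CompleteSpace E]

namespace HasGradientAt

variable {f g : E → ℝ} {u w x : E}

theorem const_mul (c : ℝ) (hf : HasGradientAt f u x) :
    HasGradientAt (fun z => c * f z) (c • u) x := by
  rw [hasGradientAt_iff_hasFDerivAt] at *
  simpa [map_smul] using hf.const_mul c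

theorem sub (hf : HasGradientAt f u x) (hg : HasGradientAt g w x) :
    HasGradientAt (fun z => f z - g z) (u - w) x := by
  rw [hasGradientAt_iff_hasFDerivAt] at *
  simpa [map_sub] using hf.fun_sub hg

theorem sum {ι : Type*} {T : Finset ι} {f : ι → E → ℝ} {u : ι → E}
    (hf : ∀ i ∈ T, HasGradientAt (f i) (u i) x) :
    HasGradientAt (fun z => ∑ i ∈ T, f i z) (∑ i ∈ T, u i) x := by
  rw [hasGradientAt_iff_hasFDerivAt]
  simpa [map_sum] using HasFDerivAt.fun_sum fun i hi => hasGradientAt_iff_hasFDerivAt.mp (hf i hi)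

end HasGradientAt

theorem hasGradientAt_const_mul_sum {ι : Type*} (T : Finset ι) {f : ι → E → ℝ} (c : ℝ) {x : E}
    (hf : ∀ i ∈ T, DifferentiableAt ℝ (f i) x) :
    HasGradientAt (fun z => c * ∑ i ∈ T, f i z) (c • ∑ i ∈ T, ∇ (f i) x) x :=
  (HasGradientAt.sum fun i hi => (hf i hi).hasGradientAt).const_mul c

def GradientStrongConvex (μ : ℝ) (f : E → ℝ) : Prop :=
  ∀ x y : E, f y ≥ f x + ⟪∇ f x, y - x⟫ + (μ / 2) * ‖x - y‖ ^ 2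

namespace GradientStrongConvex

variable {f : E → ℝ} {μ : ℝ}

theorem mono {ν : ℝ} (hf : GradientStrongConvex μ f) (hνμ : ν ≤ μ) :
    GradientStrongConvex ν f := fun x y => by
  have : ν / 2 * ‖x - y‖ ^ 2 ≤ μ / 2 * ‖x - y‖ ^ 2 := by gcongr
  linarith [hf x y]

theorem add_mul_inner_le (hf : GradientStrongConvex μ f) (hμ : 0 ≤ μ) {a b : ℝ} (ha : 0 ≤ a)
    (hb : 0 ≤ b) {p q v y : E} (hy : (a + b) • y = a • p + b • v) (z : E) :
    (a + b) * f z + (a + b) * ⟪∇ f z, y - z⟫ + b * ⟪∇ f z, q - v⟫ + b * μ / 2 * ‖z - q‖ ^ 2 ≤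
      a * f p + b * f q := by
  have hdir : (a + b) • (y - z) + b • (q - v) = a • (p - z) + b • (q - z) := by
    rw [smul_sub, hy]
    module
  have hinner := congrArg (⟪∇ f z, ·⟫) hdir
  simp only [inner_add_right, inner_smul_right] at hinner
  have : 0 ≤ a * (μ / 2 * ‖z - p‖ ^ 2) := by positivity
  linear_combination a * hf z p + b * hf z q + hinner + this

end GradientStrongConvex

theorem sum_le_of_sod {ι : Type*} (S : Finset ι) {f : ι → E → ℝ}
    (hconv : ∀ i ∈ S, GradientStrongConvex 0 (f i)) (G : E → E)
    (hG : ∀ z, ∑ i ∈ S, ∇ (f i) z = (#S : ℝ) • G z) {δ : ℝ} (hδ : 0 < δ) {x : ι → E} {m y : E}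
    (hm : ∑ i ∈ S, x i = (#S : ℝ) • m)
    (hsod : ∑ i ∈ S, ‖(G m - ∇ (f i) m) - (G y - ∇ (f i) y)‖ ^ 2 ≤ #S * δ ^ 2 * ‖m - y‖ ^ 2) :
    ∑ i ∈ S, f i m ≤ ∑ i ∈ S, f i (x i) + ∑ i ∈ S, ⟪G y - ∇ (f i) y, x i - y⟫
      + δ / 2 * ∑ i ∈ S, ‖x i - y‖ ^ 2 := by
  have hdescent : ∑ i ∈ S, f i m ≤ ∑ i ∈ S, f i (x i) + ∑ i ∈ S, ⟪∇ (f i) m, m - x i⟫ := by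
    rw [← sum_add_distrib]
    refine sum_le_sum fun i hi => ?_
    have h := hconv i hi m (x i)
    rw [← neg_sub m (x i), inner_neg_right] at h
    linarith
  linarith [sum_inner_le_of_sod S (fun i => ∇ (f i)) G hG hδ hm hsod]

theorem sum_one_step_recurrence {ι : Type*} (S : Finset ι) {f : ι → E → ℝ} {μ : ℝ} (hμ : 0 ≤ μ)
    (hconv : ∀ i ∈ S, GradientStrongConvex μ (f i)) (G : E → E)
    (hG : ∀ z, ∑ i ∈ S, ∇ (f i) z = (#S : ℝ) • G z) {δ lam A a B : ℝ} (hδ : 0 < δ)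
    (hlam : 0 < lam) (hA : 0 ≤ A) (ha : 0 < a) (hB : 0 < B) (haB : lam * a ^ 2 = (A + a) * B)
    {xr v y : E} (hy : (A + a) • y = A • xr + a • v) {x : ι → E} {m : E}
    (hm : ∑ i ∈ S, x i = (#S : ℝ) • m)
    (hsod : ∑ i ∈ S, ‖(G m - ∇ (f i) m) - (G y - ∇ (f i) y)‖ ^ 2 ≤ #S * δ ^ 2 * ‖m - y‖ ^ 2)
    {gAvg : E} (hgAvg : ∑ i ∈ S, ∇ (f i) (x i) = (#S : ℝ) • gAvg)
    {v' : E} (hv' : (B + a * μ) • v' = B • v + (a * μ) • m - a • gAvg) (p : E) :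
    (A + a) * ∑ i ∈ S, f i m + #S * ((B + a * μ) / 2 * ‖v' - p‖ ^ 2)
      + (A + a) * ((lam - δ) / 2 * ∑ i ∈ S, ‖x i - y‖ ^ 2
        - 1 / lam * ∑ i ∈ S, ‖∇ (f i) (x i) + G y - ∇ (f i) y + lam • (x i - y)‖ ^ 2) ≤
    A * ∑ i ∈ S, f i xr + a * ∑ i ∈ S, f i p + #S * (B / 2 * ‖v - p‖ ^ 2) := by
  have hlower := sum_le_sum fun i hi =>
    (hconv i hi).add_mul_inner_le hμ hA ha.le hy (q := p) (x i)
  have hgrad_sum : ∑ i ∈ S, ⟪∇ (f i) (x i), p - v⟫ = #S * ⟪gAvg, p - v⟫ := by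
    rw [← sum_inner, hgAvg, inner_smul_left, conj_trivial]
  have hflip : ∑ i ∈ S, ⟪∇ (f i) (x i), y - x i⟫ = -∑ i ∈ S, ⟪∇ (f i) (x i), x i - y⟫ := by
    simp only [← neg_sub (x _) y, inner_neg_right, sum_neg_distrib]
  simp only [sum_add_distrib, ← mul_sum, hgrad_sum, hflip] at hlower
  have hjensen := card_mul_norm_sub_sq_le S x hm p
  have hdual := half_mul_norm_sub_sq_le_of_smul_eq hB (by positivity) hv' (p := p)
  have hmodel := sum_inner_add_norm_sq_le S hlam (fun i => ∇ (f i) (x i)) (fun i => ∇ (f i) y)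
    (fun i => x i - y) (hG y) hgAvg
  have hdescent := sum_le_of_sod S (fun i hi => (hconv i hi).mono hμ) G hG hδ hm hsod
  have hcoef : a ^ 2 / (2 * B) = (A + a) / (2 * lam) := by
    field_simp
    linarith
  have hP : 0 ≤ ∑ i ∈ S, ‖∇ (f i) (x i) + G y - ∇ (f i) y + lam • (x i - y)‖ ^ 2 :=
    sum_nonneg fun i _ => sq_nonneg _
  linear_combination hlower + (a * μ / 2) * hjensen + (#S : ℝ) * hdual + (A + a) * hmodel
    + (A + a) * hdescent + ((#S : ℝ) * ‖gAvg‖ ^ 2) * hcoef + (A + a) / (2 * lam) * hP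

end Gradient

end

theorem acc_sdane_one_step_recurrence_general
    {E : Type*} [NormedAddCommGroup E] [InnerProductSpace ℝ E] [CompleteSpace E]
    (n : ℕ)
    (f' : Fin n → E → ℝ) (hdiff : ∀ i, Differentiable ℝ (f' i))
    (μ : ℝ) (hμ : 0 ≤ μ)
    (hconv : ∀ i, ∀ x y : E,
      f' i y ≥ f' i x + ⟪gradient (f' i) x, y - x⟫ + (μ / 2) * ‖x - y‖ ^ 2)
    (s : ℕ) (hs1 : 1 ≤ s)
    (δs : ℝ) (hδs : 0 < δs)
    (hSOD : ∀ S : Finset (Fin n), S.card = s → ∀ x y : E,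
      (1 / (s : ℝ)) * ∑ i ∈ S,
          ‖gradient (fun z => (1 / (s : ℝ)) * (∑ j ∈ S, f' j z) - f' i z) x
            - gradient (fun z => (1 / (s : ℝ)) * (∑ j ∈ S, f' j z) - f' i z) y‖ ^ 2
        ≤ δs ^ 2 * ‖x - y‖ ^ 2)
    (lam : ℝ) (hlam : 0 < lam)
    (S : Finset (Fin n)) (hS : S.card = s)
    (Ar Br ar1 : ℝ) (hAr : 0 ≤ Ar) (hBr : 0 < Br) (har1 : 0 < ar1)
    (haeq : lam * ar1 ^ 2 = (Ar + ar1) * Br)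
    (Ar1 : ℝ) (hAr1 : Ar1 = Ar + ar1)
    (Br1 : ℝ) (hBr1 : Br1 = Br + μ * ar1)
    (xr vr : E) (yr : E) (hyr : yr = Ar1⁻¹ • (Ar • xr + ar1 • vr))
    (xi : Fin n → E)
    (xnext : E) (hxnext : xnext = (1 / (s : ℝ)) • ∑ i ∈ S, xi i)
    (vnext : E) (hvnext : vnext = Br1⁻¹ •
      (Br • vr + (ar1 * μ) • xnext
        - ar1 • ((1 / (s : ℝ)) • ∑ i ∈ S, gradient (f' i) (xi i))))
    (xstar : E) :
    Ar * ((1 / (s : ℝ)) * ∑ i ∈ S, f' i xr)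
      + ar1 * ((1 / (s : ℝ)) * ∑ i ∈ S, f' i xstar)
      + (Br / 2) * ‖vr - xstar‖ ^ 2
    ≥ Ar1 * ((1 / (s : ℝ)) * ∑ i ∈ S, f' i xnext)
      + (Br1 / 2) * ‖vnext - xstar‖ ^ 2
      + Ar1 * (((lam - δs) / 2) * ((1 / (s : ℝ)) * ∑ i ∈ S, ‖xi i - yr‖ ^ 2)
        - (1 / lam) * ((1 / (s : ℝ)) * ∑ i ∈ S,
            ‖gradient (f' i) (xi i)
              + gradient (fun z => (1 / (s : ℝ)) * ∑ j ∈ S, f' j z) yr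
              - gradient (f' i) yr + lam • (xi i - yr)‖ ^ 2)) := by
  have hs0 : (0 : ℝ) < s := by exact_mod_cast hs1
  have hsmul : ∀ w : E, (#S : ℝ) • ((1 / (s : ℝ)) • w) = w := fun w => by
    rw [hS, one_div, smul_inv_smul₀ hs0.ne']
  set G : E → E := fun z => (1 / (s : ℝ)) • ∑ j ∈ S, gradient (f' j) z
  have hgradS : ∀ z, HasGradientAt (fun z => (1 / (s : ℝ)) * ∑ j ∈ S, f' j z) (G z) z :=
    fun z => hasGradientAt_const_mul_sum S _ fun j _ => hdiff j z
  have hgradh : ∀ i z, gradient (fun z => (1 / (s : ℝ)) * (∑ j ∈ S, f' j z) - f' i z) z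
      = G z - gradient (f' i) z := fun i z => ((hgradS z).sub (hdiff i z).hasGradientAt).gradient
  have hsod : ∑ i ∈ S, ‖(G xnext - gradient (f' i) xnext) - (G yr - gradient (f' i) yr)‖ ^ 2
      ≤ #S * δs ^ 2 * ‖xnext - yr‖ ^ 2 := by
    have h := hSOD S hS xnext yr
    simp only [hgradh] at h
    rw [one_div, inv_mul_le_iff₀ hs0] at h
    rwa [hS, mul_assoc]
  have hy : (Ar + ar1) • yr = Ar • xr + ar1 • vr := by
    rw [hyr, ← hAr1, smul_inv_smul₀ (by linarith)]
  have hv' : (Br + ar1 * μ) • vnext = Br • vr + (ar1 * μ) • xnext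
      - ar1 • ((1 / (s : ℝ)) • ∑ i ∈ S, gradient (f' i) (xi i)) := by
    rw [hvnext, hBr1, mul_comm μ ar1, smul_inv_smul₀ (by positivity)]
  have key := sum_one_step_recurrence S hμ (fun i _ => hconv i) G (fun z => (hsmul _).symm) hδs
    hlam hAr har1 hBr haeq hy (by rw [hxnext, hsmul]) hsod (hsmul _).symm hv' xstar
  rw [hS] at key
  rw [(hgradS yr).gradient, hAr1, hBr1, ge_iff_le, ← mul_le_mul_iff_of_pos_left hs0]
  refine Eq.trans_le ?_ (key.trans_eq ?_) <;> field_simp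

/-- One-step recurrence for Acc-S-DANE (Lemma `thm:OneStepRecurrence2`). -/
theorem acc_sdane_one_step_recurrence
    {E : Type*} [NormedAddCommGroup E] [InnerProductSpace ℝ E] [CompleteSpace E]
    (n : ℕ) (hn : 0 < n)
    (f' : Fin n → E → ℝ) (hdiff : ∀ i, Differentiable ℝ (f' i))
    (f : E → ℝ) (hfdef : f = fun x => (1 / (n : ℝ)) * ∑ i, f' i x)
    (μ : ℝ) (hμ : 0 ≤ μ)
    (hconv : ∀ i, ∀ x y : E,
      f' i y ≥ f' i x + ⟪gradient (f' i) x, y - x⟫ + (μ / 2) * ‖x - y‖ ^ 2)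
    (s : ℕ) (hs1 : 1 ≤ s) (hsn : s ≤ n)
    (δs : ℝ) (hδs : 0 < δs)
    (hSOD : ∀ S : Finset (Fin n), S.card = s → ∀ x y : E,
      (1 / (s : ℝ)) * ∑ i ∈ S,
          ‖gradient (fun z => (1 / (s : ℝ)) * (∑ j ∈ S, f' j z) - f' i z) x
            - gradient (fun z => (1 / (s : ℝ)) * (∑ j ∈ S, f' j z) - f' i z) y‖ ^ 2
        ≤ δs ^ 2 * ‖x - y‖ ^ 2)
    (lam : ℝ) (hlam : 0 < lam)
    (S : Finset (Fin n)) (hS : S.card = s)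
    (Ar Br ar1 : ℝ) (hAr : 0 ≤ Ar) (hBr : 0 < Br) (har1 : 0 < ar1)
    (haeq : lam * ar1 ^ 2 = (Ar + ar1) * Br)
    (Ar1 : ℝ) (hAr1 : Ar1 = Ar + ar1)
    (Br1 : ℝ) (hBr1 : Br1 = Br + μ * ar1)
    (xr vr : E) (yr : E) (hyr : yr = Ar1⁻¹ • (Ar • xr + ar1 • vr))
    (xi : Fin n → E)
    (xnext : E) (hxnext : xnext = (1 / (s : ℝ)) • ∑ i ∈ S, xi i)
    (vnext : E) (hvnext : vnext = Br1⁻¹ •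
      (Br • vr + (ar1 * μ) • xnext
        - ar1 • ((1 / (s : ℝ)) • ∑ i ∈ S, gradient (f' i) (xi i))))
    (xstar : E) (hstar : ∀ z, f xstar ≤ f z) :
    Ar * ((1 / (s : ℝ)) * ∑ i ∈ S, f' i xr)
      + ar1 * ((1 / (s : ℝ)) * ∑ i ∈ S, f' i xstar)
      + (Br / 2) * ‖vr - xstar‖ ^ 2
    ≥ Ar1 * ((1 / (s : ℝ)) * ∑ i ∈ S, f' i xnext)
      + (Br1 / 2) * ‖vnext - xstar‖ ^ 2
      + Ar1 * (((lam - δs) / 2) * ((1 / (s : ℝ)) * ∑ i ∈ S, ‖xi i - yr‖ ^ 2)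
        - (1 / lam) * ((1 / (s : ℝ)) * ∑ i ∈ S,
            ‖gradient (f' i) (xi i)
              + gradient (fun z => (1 / (s : ℝ)) * ∑ j ∈ S, f' j z) yr
              - gradient (f' i) yr + lam • (xi i - yr)‖ ^ 2)) :=
  acc_sdane_one_step_recurrence_general n f' hdiff μ hμ hconv s hs1 δs hδs hSOD lam hlam S hS Ar Br
    ar1 hAr hBr har1 haeq Ar1 hAr1 Br1 hBr1 xr vr yr hyr xi xnext hxnext vnext hvnext xstar
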